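/- Let λ ∈ [0, 1/2] and let Φ' = √λ|00⟩ + √(1−λ)|11⟩ in C^2 ⊗ C^2. Let Λ = (1/2)(|0011⟩ − |0110⟩ − |1001⟩ + |1100⟩) in (C^2)^{⊗4}, where Φ' ⊗ Φ' is regrouped with factors ordered 1,2,3,4. Then |⟨Λ, Φ' ⊗ Φ'⟩|² = λ(1 − λ). Moreover, for any single-qubit unitaries V, W and Φ = (V ⊗ W)Φ', also |⟨Λ, Φ ⊗ Φ⟩|² = λ(1 − λ). -/

import Mathlib

/-!
Writing a two-qubit vector `u` as the `2 × 2` matrix `M u` of its coefficients, the overlap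
`⟨Λ, u ⊗ u⟩` is `det (M u)`. Local operators act by `M ((V ⊗ W) u) = V (M u) Wᵀ`, so they
multiply the overlap by `det V · det W`, which has modulus one for unitaries. For `Φ'` the
coefficient matrix is `diag (√λ, √(1 - λ))`.
-/

open scoped Matrix Kronecker

noncomputable section

abbrev Qubit := EuclideanSpace ℂ (Fin 2)
abbrev TwoQubit := EuclideanSpace ℂ (Fin 2 × Fin 2)
abbrev Idx4 := Fin 2 × Fin 2 × Fin 2 × Fin 2
abbrev FourQubit := EuclideanSpace ℂ Idx4

/-- Elementary tensor of two qubit vectors. -/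
def tp (a b : Qubit) : TwoQubit := WithLp.toLp 2 fun p : Fin 2 × Fin 2 => a p.1 * b p.2

/-- Standard basis of `ℂ²`. -/
def e (i : Fin 2) : Qubit := EuclideanSpace.single i 1

/-- Standard product basis vector `|abcd⟩` of four qubits. -/
def ket4 (a b c d : Fin 2) : FourQubit := EuclideanSpace.single (a, b, c, d) 1

/-- The state `Λ = Ψ₋⁽¹³⁾ ⊗ Ψ₋⁽²⁴⁾ = (1/2)(|0011⟩ − |0110⟩ − |1001⟩ + |1100⟩)`. -/
def Lam : FourQubit :=
  (1 / 2 : ℂ) • (ket4 0 0 1 1 - ket4 0 1 1 0 - ket4 1 0 0 1 + ket4 1 1 0 0)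

/-- The operator `A ⊗ B ⊗ C ⊗ D` acting factorwise on four qubits. -/
def kron4 (A B C D : Matrix (Fin 2) (Fin 2) ℂ) : Matrix Idx4 Idx4 ℂ :=
  Matrix.of fun p q =>
    A p.1 q.1 * B p.2.1 q.2.1 * C p.2.2.1 q.2.2.1 * D p.2.2.2 q.2.2.2

/-- The double-swap unitary permuting the tensor factors by `(1 2)(3 4)`:
`(Sv)(a,b,c,d) = v(b,a,d,c)`. -/
def dblSwap : Matrix Idx4 Idx4 ℂ :=
  Matrix.of fun p q => if q = (p.2.1, p.1, p.2.2.2, p.2.2.1) then 1 else 0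

/-- The tensor `u ⊗ v` of two two-qubit states, viewed in `(ℂ²)^{⊗4}` with the
first copy on factors 1,2 and the second on factors 3,4. -/
def tpp (u v : TwoQubit) : FourQubit :=
  WithLp.toLp 2 fun p : Idx4 => u (p.1, p.2.1) * v (p.2.2.1, p.2.2.2)

def coeffMatrix {𝕜 m n : Type*} (u : EuclideanSpace 𝕜 (m × n)) : Matrix m n 𝕜 :=
  Matrix.of fun a b => u (a, b)

lemma inner_Lam_tpp_self (u : TwoQubit) : inner ℂ Lam (tpp u u) = (coeffMatrix u).det := by
  simp only [Lam, ket4, tpp, coeffMatrix, PiLp.inner_apply, RCLike.inner_apply, Matrix.det_fin_two]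
  simp only [one_div, smul_add, PiLp.add_apply, PiLp.smul_apply, PiLp.sub_apply,
    PiLp.single_apply, Prod.ext_iff, smul_eq_mul, mul_ite, mul_one, mul_zero, map_add, map_mul,
    map_inv₀, map_ofNat, map_sub, MonoidWithZeroHom.map_ite_one_zero, Fintype.sum_prod_type,
    Fin.sum_univ_two, zero_ne_one, one_ne_zero, and_false, and_true, ↓reduceIte, zero_sub,
    sub_zero, mul_neg, map_zero, add_zero, neg_zero, zero_add, Matrix.of_apply]
  ring

lemma coeffMatrix_toEuclideanLin_kronecker {𝕜 m n m' n' : Type*} [RCLike 𝕜]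
    [Fintype m] [Fintype n] [DecidableEq m] [DecidableEq n]
    (A : Matrix m' m 𝕜) (B : Matrix n' n 𝕜) (u : EuclideanSpace 𝕜 (m × n)) :
    coeffMatrix (Matrix.toEuclideanLin (A ⊗ₖ B) u) = A * coeffMatrix u * Bᵀ := by
  ext a b
  simp only [coeffMatrix, Matrix.toLpLin_apply, Matrix.mulVec, dotProduct,
    Fintype.sum_prod_type, Matrix.kroneckerMap_apply, Matrix.mul_apply, Matrix.of_apply,
    Matrix.transpose_apply, Finset.sum_mul]
  rw [Finset.sum_comm]
  exact Finset.sum_congr rfl fun _ _ => Finset.sum_congr rfl fun _ _ => by ring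

lemma det_coeffMatrix_toEuclideanLin_kronecker {𝕜 n : Type*} [RCLike 𝕜] [Fintype n]
    [DecidableEq n] (A B : Matrix n n 𝕜) (u : EuclideanSpace 𝕜 (n × n)) :
    (coeffMatrix (Matrix.toEuclideanLin (A ⊗ₖ B) u)).det = A.det * B.det * (coeffMatrix u).det := by
  rw [coeffMatrix_toEuclideanLin_kronecker, Matrix.det_mul, Matrix.det_mul, Matrix.det_transpose]
  ring

lemma norm_det_of_mem_unitaryGroup {n : Type*} [Fintype n] [DecidableEq n] {A : Matrix n n ℂ}
    (hA : A ∈ Matrix.unitaryGroup n ℂ) : ‖A.det‖ = 1 :=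
  CStarRing.norm_of_mem_unitary (Matrix.det_of_mem_unitary hA)

lemma det_coeffMatrix_diag (s t : ℂ) :
    (coeffMatrix (s • tp (e 0) (e 0) + t • tp (e 1) (e 1))).det = s * t := by
  simp [coeffMatrix, Matrix.det_fin_two, tp, e]

lemma norm_sq_sqrt_mul_sqrt {l : ℝ} (hl0 : 0 ≤ l) (hl1 : l ≤ 1) :
    ‖(Real.sqrt l : ℂ) * (Real.sqrt (1 - l) : ℂ)‖ ^ 2 = l * (1 - l) := by
  rw [norm_mul, Complex.norm_real, Complex.norm_real, Real.norm_of_nonneg (Real.sqrt_nonneg _),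
    Real.norm_of_nonneg (Real.sqrt_nonneg _), mul_pow, Real.sq_sqrt hl0,
    Real.sq_sqrt (sub_nonneg.mpr hl1)]

/-- For `λ ∈ [0, 1/2]` and `Φ' = √λ|00⟩ + √(1−λ)|11⟩`,
`|⟨Λ, Φ' ⊗ Φ'⟩|² = λ(1−λ)`, and the same holds for `Φ = (V ⊗ W)Φ'` for any
single-qubit unitaries `V`, `W`. -/
theorem stmt_18 (l : ℝ) (hl0 : 0 ≤ l) (hl : l ≤ 1 / 2)
    (Φ' : TwoQubit)
    (hΦ' : Φ' = (Real.sqrt l : ℂ) • tp (e 0) (e 0)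
        + (Real.sqrt (1 - l) : ℂ) • tp (e 1) (e 1)) :
    ‖(inner ℂ Lam (tpp Φ' Φ') : ℂ)‖ ^ 2 = l * (1 - l)
      ∧ ∀ V W : Matrix (Fin 2) (Fin 2) ℂ,
          V ∈ Matrix.unitaryGroup (Fin 2) ℂ → W ∈ Matrix.unitaryGroup (Fin 2) ℂ →
          ∀ Φ : TwoQubit, Φ = Matrix.toEuclideanLin (V ⊗ₖ W) Φ' →
            ‖(inner ℂ Lam (tpp Φ Φ) : ℂ)‖ ^ 2 = l * (1 - l) := by
  have hΦ'_overlap : ‖(inner ℂ Lam (tpp Φ' Φ') : ℂ)‖ ^ 2 = l * (1 - l) := by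
    rw [inner_Lam_tpp_self, hΦ', det_coeffMatrix_diag,
      norm_sq_sqrt_mul_sqrt hl0 (by linarith)]
  refine ⟨hΦ'_overlap, fun V W hV hW Φ hΦ => ?_⟩
  rw [← hΦ'_overlap, hΦ, inner_Lam_tpp_self, inner_Lam_tpp_self,
    det_coeffMatrix_toEuclideanLin_kronecker, norm_mul, norm_mul,
    norm_det_of_mem_unitaryGroup hV, norm_det_of_mem_unitaryGroup hW, one_mul, one_mul]
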